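/- Let (A, ·, ε, R, α) be a Rota-Baxter Hom-associative color algebra of weight λ. Define x⊣y = x·R(y) + λ x·y and x⊢y = ε(x,y)R(x)·y. Then (A, ⊣, ⊢, ε, α) is a Hom-dendriform color algebra. -/
import Mathlib


section
variable {K G A : Type*} [Field K] [AddCommGroup G] [AddCommGroup A] [Module K A]

/-- x ⊣ y = x · R(y) + λ x · y. -/
def rbL' (μ : A →ₗ[K] A →ₗ[K] A) (R : A →ₗ[K] A) (lam : K) (x y : A) : A :=
  μ x (R y) + lam • μ x y

/-- x ⊢ y = ε(x,y) R(x) · y, for x, y of degrees a, b. -/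
def rbR (ε : G → G → K) (μ : A →ₗ[K] A →ₗ[K] A) (R : A →ₗ[K] A) (a b : G) (x y : A) : A :=
  ε a b • μ (R x) y

end

/-- a Rota-Baxter Hom-associative color algebra of weight λ gives a
Hom-dendriform color algebra via x⊣y = x·R(y) + λ x·y and x⊢y = ε(x,y)R(x)·y. -/
theorem stmt_11 {K G A : Type*} [Field K] [AddCommGroup G] [AddCommGroup A] [Module K A]
    (ε : G → G → K) (𝒜 : G → Submodule K A)
    (hεs : ∀ a b, ε a b * ε b a = 1)
    (hεr : ∀ a b c, ε a (b + c) = ε a b * ε a c)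
    (hεl : ∀ a b c, ε (a + b) c = ε a c * ε b c)
    (μ : A →ₗ[K] A →ₗ[K] A) (α R : A →ₗ[K] A) (lam : K)
    (hμ : ∀ a b : G, ∀ x ∈ 𝒜 a, ∀ y ∈ 𝒜 b, μ x y ∈ 𝒜 (a + b))
    (hα : ∀ a : G, ∀ x ∈ 𝒜 a, α x ∈ 𝒜 a)
    (hR : ∀ a : G, ∀ x ∈ 𝒜 a, R x ∈ 𝒜 a)
    (hassoc : ∀ a b c : G, ∀ x ∈ 𝒜 a, ∀ y ∈ 𝒜 b, ∀ z ∈ 𝒜 c,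
      μ (α x) (μ y z) = μ (μ x y) (α z))
    (hRα : ∀ x : A, R (α x) = α (R x))
    (hRB : ∀ a b : G, ∀ x ∈ 𝒜 a, ∀ y ∈ 𝒜 b,
      μ (R x) (R y) = R (μ (R x) y + μ x (R y) + lam • μ x y)) :
    -- Hom-dendriform color algebra axioms
    ∀ a b c : G, ∀ x ∈ 𝒜 a, ∀ y ∈ 𝒜 b, ∀ z ∈ 𝒜 c,
      (rbL' μ R lam (rbL' μ R lam x y) (α z)
        = rbL' μ R lam (α x) (rbL' μ R lam y z + ε c b • rbR ε μ R b c y z)) ∧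
      (rbL' μ R lam (rbR ε μ R a b x y) (α z)
        = ε c a • rbR ε μ R a (b + c) (α x) (rbL' μ R lam y z)) ∧
      (rbR ε μ R a (b + c) (α x) (rbR ε μ R b c y z)
        = rbR ε μ R (a + b) c (ε a b • rbL' μ R lam x y + rbR ε μ R a b x y) (α z)) := by
  intro a b c x hx y hy z hz
  have hRx := hR a x hx
  have hRy := hR b y hy
  have hRz := hR c z hz
  have h1 := hassoc a b c x hx (R y) hRy (R z) hRz
  have h2 := hassoc a b c x hx y hy (R z) hRz
  have h3 := hassoc a b c x hx (R y) hRy z hz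
  have h4 := hassoc a b c x hx y hy z hz
  have h5 := hassoc a b c (R x) hRx y hy (R z) hRz
  have h6 := hassoc a b c (R x) hRx y hy z hz
  have h7 := hassoc a b c (R x) hRx (R y) hRy z hz
  have hRBbc := hRB b c y hy z hz
  have hRBab := hRB a b x hx y hy
  have hcb : ε c b * ε b c = 1 := by rw [mul_comm]; exact hεs b c
  have hca : ε c a * ε a c = 1 := by rw [mul_comm]; exact hεs a c
  refine ⟨?_, ?_, ?_⟩
  · have key : (rbL' μ R lam y z + ε c b • rbR ε μ R b c y z)
        = μ (R y) z + μ y (R z) + lam • μ y z := by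
      simp only [rbL', rbR, smul_smul, hcb, one_smul]; abel
    have keyR : R (μ (R y) z + μ y (R z) + lam • μ y z) = μ (R y) (R z) := hRBbc.symm
    rw [key]
    simp only [rbL', keyR, map_add, map_smul, LinearMap.add_apply, LinearMap.smul_apply,
      hRα, h1, h2, h3, h4]
    module
  · simp only [rbL', rbR, map_add, map_smul, LinearMap.add_apply, LinearMap.smul_apply, hRα,
      hεr, smul_smul, h5, h6, smul_add]
    match_scalars
    · linear_combination (-ε a b) * hca
    · linear_combination (-lam * ε a b) * hca
  · have key3 : (ε a b • rbL' μ R lam x y + rbR ε μ R a b x y)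
        = ε a b • (μ (R x) y + μ x (R y) + lam • μ x y) := by
      simp only [rbL', rbR]; module
    rw [key3]
    simp only [rbR, map_smul, LinearMap.smul_apply, ← hRBab, hRα, smul_smul, h7, hεr, hεl]
    match_scalars
    ring
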